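/- arXiv:2409.20464 — 2 statements merged into one kernel-verified Lean document; each statement's English description precedes it below -/
import Mathlib

section
/- A continuous map X → Q has the left lifting property with respect to {a,b} → {*} ({a,b} discrete) if and only if every clopen subset of X is the preimage of a clopen subset of Q. In particular, if X is connected, or if X → Q is a quotient map with connected fibres, then X → Q has this left lifting property. -/
/-- The Quillen lifting property `f ⧄ g` for continuous maps. -/
def HasLift {A B X Y : Type*} [TopologicalSpace A] [TopologicalSpace B] [TopologicalSpace X]
    [TopologicalSpace Y] (f : C(A, B)) (g : C(X, Y)) : Prop :=
  ∀ (t : C(A, X)) (b : C(B, Y)), (∀ a, g (t a) = b (f a)) →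
    ∃ h : C(B, X), (∀ a, h (f a) = t a) ∧ (∀ x, g (h x) = b x)

/-- The unique map to the one-point space. -/
def toUnit (X : Type*) [TopologicalSpace X] : C(X, PUnit) :=
  ⟨fun _ => PUnit.unit, continuous_const⟩

theorem llp_bool_of_clopen_preimage {X Q : Type*} [TopologicalSpace X] [TopologicalSpace Q]
    (f : C(X, Q))
    (H : ∀ U : Set X, IsClopen U → ∃ V : Set Q, IsClopen V ∧ U = f ⁻¹' V) :
    HasLift f (toUnit Bool) := by
  intro t b _
  have hU : IsClopen (t ⁻¹' {true}) := (isClopen_discrete {true}).preimage t.continuous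
  obtain ⟨V, hV, hUV⟩ := H _ hU
  refine ⟨⟨V.boolIndicator, (continuous_boolIndicator_iff_isClopen V).mpr hV⟩, fun a => ?_,
    fun x => rfl⟩
  by_cases h : t a = true
  · have hm : a ∈ (⇑t ⁻¹' {true}) := h
    rw [hUV] at hm
    simp [h, (V.mem_iff_boolIndicator _).mp hm]
  · have : a ∉ f ⁻¹' V := fun hc => h (by rw [← hUV] at hc; exact hc)
    simp only [Bool.not_eq_true] at h
    simp [h, (V.notMem_iff_boolIndicator _).mp this]

/-- A continuous map `f : X → Q` has the left lifting property with respect to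
`{a,b} → {*}` iff every clopen subset of `X` is the preimage of a clopen subset
of `Q`.  In particular this holds if `X` is connected, or if `f` is a quotient
map with connected fibres. -/
theorem llp_bool_iff_clopen_preimage {X Q : Type*} [TopologicalSpace X] [TopologicalSpace Q]
    (f : C(X, Q)) :
    (HasLift f (toUnit Bool) ↔
        ∀ U : Set X, IsClopen U → ∃ V : Set Q, IsClopen V ∧ U = f ⁻¹' V) ∧
    (ConnectedSpace X → HasLift f (toUnit Bool)) ∧
    (Topology.IsQuotientMap f → (∀ q : Q, IsConnected (f ⁻¹' {q})) →
        HasLift f (toUnit Bool)) := by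
  have main : HasLift f (toUnit Bool) ↔
      ∀ U : Set X, IsClopen U → ∃ V : Set Q, IsClopen V ∧ U = f ⁻¹' V := by
    constructor
    · intro h U hU
      obtain ⟨hlift, hfac, _⟩ := h ⟨U.boolIndicator,
        (continuous_boolIndicator_iff_isClopen U).mpr hU⟩ (toUnit Q) (fun _ => rfl)
      refine ⟨hlift ⁻¹' {true}, (isClopen_discrete _).preimage hlift.continuous, ?_⟩
      ext x
      simp only [Set.mem_preimage, Set.mem_singleton_iff, hfac x]
      exact U.mem_iff_boolIndicator x
    · exact llp_bool_of_clopen_preimage f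
  refine ⟨main, ?_, ?_⟩
  · intro hc
    apply llp_bool_of_clopen_preimage
    intro U hU
    rcases isClopen_iff.mp hU with rfl | rfl
    · exact ⟨∅, isClopen_empty, rfl⟩
    · exact ⟨Set.univ, isClopen_univ, rfl⟩
  · intro hq hfib
    apply llp_bool_of_clopen_preimage
    intro U hU
    refine ⟨{q | f ⁻¹' {q} ⊆ U}, ?_, ?_⟩
    · have hpre : f ⁻¹' {q | f ⁻¹' {q} ⊆ U} = U := by
        ext x
        simp only [Set.mem_preimage, Set.mem_setOf_eq]
        constructor
        · intro h; exact h rfl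
        · intro hx
          exact (hfib (f x)).isPreconnected.subset_isClopen hU ⟨x, rfl, hx⟩
      constructor
      · rw [← isOpen_compl_iff, ← hq.isOpen_preimage, Set.preimage_compl, hpre,
          isOpen_compl_iff]
        exact hU.isClosed
      · rw [← hq.isOpen_preimage, hpre]; exact hU.isOpen
    · ext x
      simp only [Set.mem_preimage, Set.mem_setOf_eq]
      constructor
      · intro hx
        exact (hfib (f x)).isPreconnected.subset_isClopen hU ⟨x, rfl, hx⟩
      · intro h; exact h rfl
end

section
/- In the category of topological spaces, the class ({ {a} → {a ↔ b}, Sierpinski-codiscrete map })^l, i.e. the left complement of the two maps: (i) the inclusion of a point into the two-point indiscrete space, and (ii) the map from the Sierpinski space {o → c} to the two-point indiscrete space {o ↔ c}, is exactly the class of quotient maps (canonical mappings X → X/R for equivalence relations R). -/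
/-- The Sierpinski space `{o → c}`: `o` open, `c` closed. -/
inductive Sierp : Type
  | o : Sierp
  | c : Sierp

instance : TopologicalSpace Sierp where
  IsOpen s := Sierp.c ∈ s → Sierp.o ∈ s
  isOpen_univ := fun _ => trivial
  isOpen_inter := fun _ _ hs ht h => ⟨hs h.1, ht h.2⟩
  isOpen_sUnion := fun S hS h => by
    obtain ⟨s, hs, hcs⟩ := h
    exact ⟨s, hs, hS s hs hcs⟩

/-- The two-point indiscrete (antidiscrete) space `{o ↔ c}`. -/
inductive Indisc : Type
  | o : Indisc
  | c : Indisc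

instance : TopologicalSpace Indisc where
  IsOpen s := Indisc.o ∈ s ↔ Indisc.c ∈ s
  isOpen_univ := Iff.rfl
  isOpen_inter := fun _ _ hs ht => and_congr hs ht
  isOpen_sUnion := fun S hS =>
    ⟨fun ⟨s, hs, h⟩ => ⟨s, hs, (hS s hs).1 h⟩, fun ⟨s, hs, h⟩ => ⟨s, hs, (hS s hs).2 h⟩⟩

/-- The inclusion of a point into the two-point indiscrete space. -/
def ptToIndisc : C(PUnit, Indisc) :=
  ⟨fun _ => Indisc.o, continuous_const⟩

/-- The map from the Sierpinski space to the two-point indiscrete space which is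
the identity on points (`o ↦ o`, `c ↦ c`). -/
def sierpToIndisc : C(Sierp, Indisc) :=
  ⟨fun x => match x with | Sierp.o => Indisc.o | Sierp.c => Indisc.c,
    continuous_def.mpr fun s hs => fun h => hs.2 h⟩
/-
Lifting against `{a} → {a ↔ b}` says exactly that `f` is surjective: test it with the
indicator of the range of `f`, continuous into the indiscrete space. The map
`{o → c} → {o ↔ c}` is bijective and maps into `{o → c}` classify open sets (as preimages of
`{o}`), so lifting against it says exactly that a set with open preimage under `f` is open.
-/

instance : IndiscreteTopology Indisc where
  eq_top := top_unique fun s (hs : Indisc.o ∈ s ↔ Indisc.c ∈ s) => by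
    rw [TopologicalSpace.isOpen_top_iff, Set.eq_empty_iff_forall_notMem, Set.eq_univ_iff_forall]
    by_cases ho : Indisc.o ∈ s
    · exact .inr fun x => by cases x <;> simp_all
    · exact .inl fun x => by cases x <;> simp_all

lemma isOpen_sierp_o : IsOpen {Sierp.o} := fun h => absurd h (by simp)

lemma continuous_to_sierp_iff {Z : Type*} [TopologicalSpace Z] {g : Z → Sierp} :
    Continuous g ↔ IsOpen (g ⁻¹' {Sierp.o}) := by
  refine ⟨fun hg => isOpen_sierp_o.preimage hg, fun ho => continuous_def.2 fun u hu => ?_⟩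
  -- The open sets of `Sierp` are `∅`, `{o}` and `univ`.
  have : g ⁻¹' u = (g ⁻¹' {Sierp.o} ∩ {_z | Sierp.o ∈ u}) ∪ {_z | Sierp.c ∈ u} := by
    ext z
    cases hz : g z <;> simp only [Set.mem_preimage, Set.mem_union, Set.mem_inter_iff, hz,
      Set.mem_singleton_iff, Set.mem_ofPred_eq, true_and, reduceCtorEq, false_and, false_or]
    exact ⟨.inl, fun h => h.elim id hu⟩
  rw [this]
  exact (ho.inter isOpen_const).union isOpen_const

def sierpEquivIndisc : Sierp ≃ Indisc where
  toFun := sierpToIndisc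
  invFun := fun | .o => .o | .c => .c
  left_inv := fun x => by cases x <;> rfl
  right_inv := fun x => by cases x <;> rfl

lemma hasLift_ptToIndisc_iff {A B : Type*} [TopologicalSpace A] [TopologicalSpace B]
    (f : C(A, B)) : HasLift f ptToIndisc ↔ Function.Surjective f := by
  classical
  refine ⟨fun hlift y => ?_, fun hf t b hb => ⟨.const B PUnit.unit, fun _ => rfl, fun x => ?_⟩⟩
  · by_contra hy
    let b : C(B, Indisc) :=
      ⟨fun x => if x ∈ Set.range f then .o else .c, continuous_of_indiscreteTopology⟩
    obtain ⟨h, -, hh⟩ := hlift (.const A PUnit.unit) b fun a => by simp [b, ptToIndisc]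
    simpa [b, ptToIndisc, hy] using hh y
  · obtain ⟨a, rfl⟩ := hf x
    exact hb a

lemma hasLift_sierpToIndisc_iff {A B : Type*} [TopologicalSpace A] [TopologicalSpace B]
    (f : C(A, B)) : HasLift f sierpToIndisc ↔ ∀ s : Set B, IsOpen (f ⁻¹' s) → IsOpen s := by
  classical
  constructor
  · intro hlift s hs
    let g : B → Sierp := fun x => if x ∈ s then .o else .c
    have hg : g ⁻¹' {Sierp.o} = s := by ext x; by_cases hx : x ∈ s <;> simp [g, hx]
    obtain ⟨h, -, hh⟩ := hlift ⟨g ∘ f, continuous_to_sierp_iff.2 (by rwa [Set.preimage_comp, hg])⟩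
      ⟨sierpToIndisc ∘ g, continuous_of_indiscreteTopology⟩ fun _ => rfl
    have : ⇑h = g := funext fun x => sierpEquivIndisc.injective (hh x)
    rw [← hg, ← this]
    exact isOpen_sierp_o.preimage h.continuous
  · intro hf t b hb
    -- `sierpToIndisc` is bijective, so the only candidate lift is `b` read back in `Sierp`.
    let h : B → Sierp := sierpEquivIndisc.symm ∘ b
    have hhf : h ∘ f = t := funext fun a => by
      change sierpEquivIndisc.symm (b (f a)) = t a
      rw [← hb a]
      exact sierpEquivIndisc.symm_apply_apply (t a)
    refine ⟨⟨h, continuous_to_sierp_iff.2 (hf _ ?_)⟩, congrFun hhf,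
      fun x => sierpEquivIndisc.apply_symm_apply (b x)⟩
    rw [← Set.preimage_comp, hhf]
    exact isOpen_sierp_o.preimage t.continuous

/-- The left lifting complement of the two maps `{a} → {a ↔ b}` and
`{o → c} → {o ↔ c}` is exactly the class of quotient maps. -/
theorem llp_eq_quotient_maps {A B : Type*} [TopologicalSpace A] [TopologicalSpace B]
    (f : C(A, B)) :
    (HasLift f ptToIndisc ∧ HasLift f sierpToIndisc) ↔ Topology.IsQuotientMap f := by
  rw [hasLift_ptToIndisc_iff, hasLift_sierpToIndisc_iff, Topology.isQuotientMap_iff,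
    and_comm (a := Topology.IsCoinducing f), Topology.isCoinducing_iff]
  exact and_congr_right' <| forall_congr' fun s =>
    ⟨fun h => ⟨h, f.continuous.isOpen_preimage s⟩, Iff.mp⟩
end
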